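/- Let R be a unique factorization domain and let a, b, c ∈ R with a ≠ 0 and such that every common divisor of a, b, and c is a unit. If there exist b₁, b₂ ∈ R such that b₁·b₂ = a·c and b₁ + b₂ = b, then there exist A, B, C, D ∈ R with a·x² + b·x + c = (A·x + B)·(C·x + D) as an equality in R[x]. -/

import Mathlib

/-!
Since `a ∣ b₁ * b₂` and divisors in a UFD are primal, `a = a₁ * a₂` with `b₁ = a₁ * d` and
`b₂ = a₂ * e`; cancelling `a` in `b₁ * b₂ = a * c` gives `c = d * e`, and then
`a x² + (b₁ + b₂) x + c = (a₁ x + e) (a₂ x + d)`.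
-/

open Polynomial

theorem exists_factors_of_mul_eq_mul {M : Type*} [CommMonoidWithZero M] [IsCancelMulZero M]
    [DecompositionMonoid M] {a b₁ b₂ c : M} (ha : a ≠ 0) (h : b₁ * b₂ = a * c) :
    ∃ a₁ a₂ d e : M, a = a₁ * a₂ ∧ b₁ = a₁ * d ∧ b₂ = a₂ * e ∧ c = d * e := by
  obtain ⟨a₁, a₂, ⟨d, rfl⟩, ⟨e, rfl⟩, rfl⟩ := exists_dvd_and_dvd_of_dvd_mul ⟨c, h⟩
  exact ⟨a₁, a₂, d, e, rfl, rfl, rfl, mul_left_cancel₀ ha (h.symm.trans (mul_mul_mul_comm ..))⟩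

theorem quadratic_eq_mul_linear {R : Type*} [CommSemiring R] (a₁ a₂ d e : R) :
    C (a₁ * a₂) * X ^ 2 + C (a₁ * d + a₂ * e) * X + C (d * e)
      = (C a₁ * X + C e) * (C a₂ * X + C d) := by
  simp only [map_mul, map_add]
  ring

theorem factors_of_split_middle_general
    {R : Type*} [CommRing R] [IsDomain R] [UniqueFactorizationMonoid R]
    (a b c : R) (ha : a ≠ 0)
    (h : ∃ b₁ b₂ : R, b₁ * b₂ = a * c ∧ b₁ + b₂ = b) :
    ∃ A B C D : R,
      Polynomial.C a * Polynomial.X ^ 2 + Polynomial.C b * Polynomial.X + Polynomial.C c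
        = (Polynomial.C A * Polynomial.X + Polynomial.C B) *
          (Polynomial.C C * Polynomial.X + Polynomial.C D) := by
  obtain ⟨b₁, b₂, hmul, rfl⟩ := h
  obtain ⟨a₁, a₂, d, e, rfl, rfl, rfl, rfl⟩ := exists_factors_of_mul_eq_mul ha hmul
  exact ⟨a₁, e, a₂, d, quadratic_eq_mul_linear a₁ a₂ d e⟩

theorem factors_of_split_middle
    {R : Type*} [CommRing R] [IsDomain R] [UniqueFactorizationMonoid R]
    (a b c : R) (ha : a ≠ 0)
    (hcop : ∀ d : R, d ∣ a → d ∣ b → d ∣ c → IsUnit d)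
    (h : ∃ b₁ b₂ : R, b₁ * b₂ = a * c ∧ b₁ + b₂ = b) :
    ∃ A B C D : R,
      Polynomial.C a * Polynomial.X ^ 2 + Polynomial.C b * Polynomial.X + Polynomial.C c
        = (Polynomial.C A * Polynomial.X + Polynomial.C B) *
          (Polynomial.C C * Polynomial.X + Polynomial.C D) :=
  factors_of_split_middle_general a b c ha h
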